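/- arXiv:2202.04187 — 2 statements merged into one kernel-verified Lean document; each statement's English description precedes it below -/
import Mathlib

section
/- For nonnegative random variables Z₁, …, Z_n (not all zero a.s., with ln Z_i integrable), E[ln Σ_i Z_i] ≥ ln Σ_i exp(E[ln Z_i]). -/
open MeasureTheory

/-!
Gibbs' inequality `∑ᵢ wᵢ (log zᵢ - log wᵢ) ≤ log ∑ᵢ zᵢ` holds pointwise for every probability
vector `w` (Jensen for the concave `log` at the points `zᵢ / wᵢ`). Integrating it gives
`E[log ∑ᵢ Zᵢ] ≥ ∑ᵢ wᵢ (E[log Zᵢ] - log wᵢ)`, and the softmax weights `wᵢ ∝ exp E[log Zᵢ]`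
turn the right-hand side into `log ∑ᵢ exp E[log Zᵢ]`.
-/

open Real Finset

theorem Real.sum_mul_log_sub_log_le_log_sum {ι : Type*} (s : Finset ι) {w z : ι → ℝ}
    (hw : ∀ i ∈ s, 0 < w i) (hw₁ : ∑ i ∈ s, w i = 1) (hz : ∀ i ∈ s, 0 < z i) :
    ∑ i ∈ s, w i * (log (z i) - log (w i)) ≤ log (∑ i ∈ s, z i) := by
  have jensen := strictConcaveOn_log_Ioi.concaveOn.le_map_sum (p := fun i => z i / w i)
    (fun i hi => (hw i hi).le) hw₁ (fun i hi => Set.mem_Ioi.mpr (div_pos (hz i hi) (hw i hi)))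
  calc ∑ i ∈ s, w i * (log (z i) - log (w i))
      = ∑ i ∈ s, w i • log (z i / w i) := by
        refine sum_congr rfl fun i hi => ?_
        rw [smul_eq_mul, log_div (hz i hi).ne' (hw i hi).ne']
    _ ≤ log (∑ i ∈ s, w i • (z i / w i)) := jensen
    _ = log (∑ i ∈ s, z i) := by
        congr 1
        exact sum_congr rfl fun i hi => mul_div_cancel₀ _ (hw i hi).ne'

theorem MeasureTheory.sum_mul_integral_log_sub_log_le_integral_log_sum {Ω ι : Type*}
    [MeasurableSpace Ω] {μ : Measure Ω} [IsProbabilityMeasure μ] [Fintype ι]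
    {Z : ι → Ω → ℝ} (hZ : ∀ᵐ ω ∂μ, ∀ i, 0 < Z i ω)
    (hlog : ∀ i, Integrable (fun ω => log (Z i ω)) μ)
    (hlogsum : Integrable (fun ω => log (∑ i, Z i ω)) μ)
    {w : ι → ℝ} (hw : ∀ i, 0 < w i) (hw₁ : ∑ i, w i = 1) :
    ∑ i, w i * (∫ ω, log (Z i ω) ∂μ - log (w i)) ≤ ∫ ω, log (∑ i, Z i ω) ∂μ := by
  have hint : ∀ i, Integrable (fun ω => w i * (log (Z i ω) - log (w i))) μ := fun i =>
    ((hlog i).sub (integrable_const _)).const_mul _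
  calc ∑ i, w i * (∫ ω, log (Z i ω) ∂μ - log (w i))
      = ∫ ω, ∑ i, w i * (log (Z i ω) - log (w i)) ∂μ := by
        rw [integral_finsetSum _ fun i _ => hint i]
        refine sum_congr rfl fun i _ => ?_
        rw [integral_const_mul, integral_sub (hlog i) (integrable_const _), integral_const,
          probReal_univ, one_smul]
    _ ≤ ∫ ω, log (∑ i, Z i ω) ∂μ := by
        refine integral_mono_ae (integrable_finsetSum _ fun i _ => hint i) hlogsum ?_
        filter_upwards [hZ] with ω hω
        exact sum_mul_log_sub_log_le_log_sum _ (fun i _ => hw i) hw₁ fun i _ => hω i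

section Softmax

variable {ι : Type*} [Fintype ι]

noncomputable def Real.softmax (m : ι → ℝ) (i : ι) : ℝ :=
  exp (m i) / ∑ j, exp (m j)

variable [Nonempty ι] (m : ι → ℝ)

theorem Real.sum_exp_pos : 0 < ∑ j, exp (m j) :=
  sum_pos (fun i _ => exp_pos (m i)) univ_nonempty

theorem Real.softmax_pos (i : ι) : 0 < softmax m i :=
  div_pos (exp_pos _) (sum_exp_pos m)

theorem Real.sum_softmax : ∑ i, softmax m i = 1 := by
  simp only [softmax, ← sum_div]
  exact div_self (sum_exp_pos m).ne'

theorem Real.log_softmax (i : ι) : log (softmax m i) = m i - log (∑ j, exp (m j)) := by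
  rw [softmax, log_div (exp_ne_zero _) (sum_exp_pos m).ne', log_exp]

theorem Real.sum_softmax_mul_sub_log_softmax :
    ∑ i, softmax m i * (m i - log (softmax m i)) = log (∑ j, exp (m j)) := by
  simp only [log_softmax, sub_sub_cancel, ← sum_mul, sum_softmax, one_mul]

end Softmax

theorem log_sum_expectation_lower_bound_general {Ω : Type*} [MeasureSpace Ω]
    [IsProbabilityMeasure (volume : Measure Ω)] (n : ℕ) (Z : Fin n → Ω → ℝ)
    (hpos : ∀ i ω, 0 < Z i ω)
    (hlogint : ∀ i, Integrable (fun ω => Real.log (Z i ω)))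
    (hsumint : Integrable (fun ω => Real.log (∑ i, Z i ω))) :
    ∫ ω, Real.log (∑ i, Z i ω) ≥ Real.log (∑ i, Real.exp (∫ ω, Real.log (Z i ω))) := by
  cases isEmpty_or_nonempty (Fin n)
  · simp
  set m : Fin n → ℝ := fun i => ∫ ω, log (Z i ω)
  have gibbs := sum_mul_integral_log_sub_log_le_integral_log_sum
    (ae_of_all _ fun ω i => hpos i ω) hlogint hsumint (softmax_pos m) (sum_softmax m)
  rwa [sum_softmax_mul_sub_log_softmax] at gibbs

/-- Variational lower bound on the expectation of a log-sum: for positive integrable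
random variables `Z₁, …, Z_n` with integrable logarithms,
`E[ln Σᵢ Zᵢ] ≥ ln Σᵢ exp(E[ln Zᵢ])`. -/
theorem log_sum_expectation_lower_bound {Ω : Type*} [MeasureSpace Ω]
    [IsProbabilityMeasure (volume : Measure Ω)] (n : ℕ) (Z : Fin n → Ω → ℝ)
    (hpos : ∀ i ω, 0 < Z i ω)
    (hint : ∀ i, Integrable (Z i))
    (hlogint : ∀ i, Integrable (fun ω => Real.log (Z i ω)))
    (hsumint : Integrable (fun ω => Real.log (∑ i, Z i ω))) :
    ∫ ω, Real.log (∑ i, Z i ω) ≥ Real.log (∑ i, Real.exp (∫ ω, Real.log (Z i ω))) :=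
  log_sum_expectation_lower_bound_general n Z hpos hlogint hsumint
end

section
/- For a binary mixture: if X has density f(x) = (1-c)P₁(x) + c P₂(x) where P₁, P₂ are probability densities and c ∈ [0,1], and S is a Bernoulli-type variable with P(S=1)=c, P(S=-1)=1-c, such that X given S=-1 has density P₁ and given S=1 has density P₂, then the mutual information satisfies I(S,X) ≤ -(1-c)·ln[(1-c) + c·exp(-D_KL(P₁‖P₂))] - c·ln[c + (1-c)·exp(-D_KL(P₂‖P₁))]. -/
open MeasureTheory

lemma aux_exp (l s : ℝ) (h0 : 0 ≤ l) (h1 : l ≤ 1) :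
    Real.exp (l * s) ≤ (1 - l) + l * Real.exp s := by
  have h := convexOn_exp.2 (Set.mem_univ (0:ℝ)) (Set.mem_univ s)
    (by linarith : (0:ℝ) ≤ 1 - l) h0 (by ring)
  simpa using h

lemma aux_pos (a b K : ℝ) (ha : 0 ≤ a) (hb : 0 ≤ b) (hab : a + b = 1) :
    0 < a + b * Real.exp (-K) := by
  rcases eq_or_lt_of_le hb with h | h
  · have : a = 1 := by linarith
    simp [← h, this]
  · have h2 : 0 < b * Real.exp (-K) := mul_pos h (Real.exp_pos _)
    nlinarith

lemma aux_log (a b K p q : ℝ) (ha : 0 ≤ a) (hb : 0 ≤ b) (hab : a + b = 1)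
    (hp : 0 < p) (hq : 0 < q) :
    Real.log (a + b * Real.exp (-K))
      + (b * Real.exp (-K) / (a + b * Real.exp (-K))) * (Real.log (q / p) + K)
      ≤ Real.log (a * p + b * q) - Real.log p := by
  set D := a + b * Real.exp (-K) with hD
  have hDpos : 0 < D := aux_pos a b K ha hb hab
  set l := b * Real.exp (-K) / D with hl
  have hl0 : 0 ≤ l := div_nonneg (mul_nonneg hb (Real.exp_pos _).le) hDpos.le
  have hl1 : l ≤ 1 := by
    rw [hl, div_le_one hDpos, hD]; linarith
  set s := Real.log (q / p) + K with hs
  have hDl : D * l = b * Real.exp (-K) := by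
    rw [hl]; field_simp
  have h2 : Real.exp s = q / p * Real.exp K := by
    rw [hs, Real.exp_add, Real.exp_log (div_pos hq hp)]
  have h3 : Real.exp (-K) * Real.exp K = 1 := by
    rw [← Real.exp_add]; simp
  have key : a * p + b * q = p * (D * ((1 - l) + l * Real.exp s)) := by
    have e1 : p * (D * ((1 - l) + l * Real.exp s))
        = (D - D * l) * p + (D * l) * Real.exp K * (p * (q / p)) := by
      rw [h2]; ring
    have e2 : p * (q / p) = q := by field_simp
    rw [e1, e2, hDl, hD]
    linear_combination (-(b * q)) * h3
  have hpos2 : 0 < (1 - l) + l * Real.exp s :=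
    lt_of_lt_of_le (Real.exp_pos _) (aux_exp l s hl0 hl1)
  have h4 : l * s ≤ Real.log ((1 - l) + l * Real.exp s) := by
    rw [← Real.log_exp (l * s)]
    exact Real.log_le_log (Real.exp_pos _) (aux_exp l s hl0 hl1)
  rw [key, Real.log_mul hp.ne' (mul_pos hDpos hpos2).ne',
    Real.log_mul hDpos.ne' hpos2.ne']
  have : l * (Real.log (q / p) + K) = l * s := by rw [hs]
  linarith

/-- Upper bound on the mutual information between a binary sensitive attribute and
node attributes for a binary Gaussian-type mixture: with mixture density
`f = (1-c)P₁ + cP₂`, the mutual information `I(S,X) = H(X) - (1-c)H(X|S=-1) - cH(X|S=1)`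
satisfies `I(S,X) ≤ -(1-c)ln[(1-c) + c e^{-D_KL(P₁‖P₂)}] - c ln[c + (1-c)e^{-D_KL(P₂‖P₁)}]`. -/
theorem mutual_information_mixture_upper_bound {d : ℕ} (P₁ P₂ : (Fin d → ℝ) → ℝ)
    (c : ℝ) (hc : c ∈ Set.Icc (0 : ℝ) 1)
    (hP₁_pos : ∀ x, 0 < P₁ x) (hP₂_pos : ∀ x, 0 < P₂ x)
    (hP₁_int : ∫ x, P₁ x = 1) (hP₂_int : ∫ x, P₂ x = 1)
    (hent₁ : Integrable (fun x => P₁ x * Real.log (P₁ x)))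
    (hent₂ : Integrable (fun x => P₂ x * Real.log (P₂ x)))
    (hentf : Integrable (fun x =>
      ((1 - c) * P₁ x + c * P₂ x) * Real.log ((1 - c) * P₁ x + c * P₂ x)))
    (hkl₁₂ : Integrable (fun x => P₁ x * Real.log (P₁ x / P₂ x)))
    (hkl₂₁ : Integrable (fun x => P₂ x * Real.log (P₂ x / P₁ x))) :
    (-∫ x, ((1 - c) * P₁ x + c * P₂ x) * Real.log ((1 - c) * P₁ x + c * P₂ x))
        - (1 - c) * (-∫ x, P₁ x * Real.log (P₁ x))
        - c * (-∫ x, P₂ x * Real.log (P₂ x))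
      ≤ -(1 - c) * Real.log ((1 - c)
            + c * Real.exp (-∫ x, P₁ x * Real.log (P₁ x / P₂ x)))
        - c * Real.log (c
            + (1 - c) * Real.exp (-∫ x, P₂ x * Real.log (P₂ x / P₁ x))) := by
  obtain ⟨hc0, hc1⟩ := hc
  have hc1' : (0:ℝ) ≤ 1 - c := by linarith
  have hP₁i : Integrable P₁ := by
    by_contra h
    rw [integral_undef h] at hP₁_int
    exact one_ne_zero hP₁_int.symm
  have hP₂i : Integrable P₂ := by
    by_contra h
    rw [integral_undef h] at hP₂_int
    exact one_ne_zero hP₂_int.symm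
  -- swapped-log integrands
  have hswap₁ : (fun x => P₁ x * Real.log (P₂ x / P₁ x))
      = fun x => -(P₁ x * Real.log (P₁ x / P₂ x)) := by
    funext x
    rw [Real.log_div (hP₂_pos x).ne' (hP₁_pos x).ne',
      Real.log_div (hP₁_pos x).ne' (hP₂_pos x).ne']
    ring
  have hswap₂ : (fun x => P₂ x * Real.log (P₁ x / P₂ x))
      = fun x => -(P₂ x * Real.log (P₂ x / P₁ x)) := by
    funext x
    rw [Real.log_div (hP₂_pos x).ne' (hP₁_pos x).ne',
      Real.log_div (hP₁_pos x).ne' (hP₂_pos x).ne']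
    ring
  have hkl₁₂' : Integrable (fun x => P₁ x * Real.log (P₂ x / P₁ x)) := by
    rw [hswap₁]; exact hkl₁₂.neg
  have hkl₂₁' : Integrable (fun x => P₂ x * Real.log (P₁ x / P₂ x)) := by
    rw [hswap₂]; exact hkl₂₁.neg
  set K₁ := ∫ x, P₁ x * Real.log (P₁ x / P₂ x) with hK₁
  set K₂ := ∫ x, P₂ x * Real.log (P₂ x / P₁ x) with hK₂
  have hI₁ : ∫ x, P₁ x * Real.log (P₂ x / P₁ x) = -K₁ := by
    rw [hswap₁, integral_neg]
  have hI₂ : ∫ x, P₂ x * Real.log (P₁ x / P₂ x) = -K₂ := by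
    rw [hswap₂, integral_neg]
  set D₁ := (1 - c) + c * Real.exp (-K₁) with hD₁
  set D₂ := c + (1 - c) * Real.exp (-K₂) with hD₂
  set l₁ := c * Real.exp (-K₁) / D₁ with hl₁
  set l₂ := (1 - c) * Real.exp (-K₂) / D₂ with hl₂
  set a₁ := -(1 - c) * (Real.log D₁ + l₁ * K₁) with ha₁
  set b₁ := -(1 - c) * l₁ with hb₁
  set a₂ := -c * (Real.log D₂ + l₂ * K₂) with ha₂
  set b₂ := -c * l₂ with hb₂
  set F := fun x => (1 - c) * (P₁ x * Real.log (P₁ x)) + c * (P₂ x * Real.log (P₂ x))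
      - ((1 - c) * P₁ x + c * P₂ x) * Real.log ((1 - c) * P₁ x + c * P₂ x) with hF
  set G := fun x => a₁ * P₁ x + b₁ * (P₁ x * Real.log (P₂ x / P₁ x))
      + a₂ * P₂ x + b₂ * (P₂ x * Real.log (P₁ x / P₂ x)) with hG
  have hFint : Integrable F :=
    ((hent₁.const_mul _).add (hent₂.const_mul _)).sub hentf
  have hGint : Integrable G :=
    (((hP₁i.const_mul _).add (hkl₁₂'.const_mul _)).add (hP₂i.const_mul _)).add
      (hkl₂₁'.const_mul _)
  have hFG : ∀ x, F x ≤ G x := by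
    intro x
    have h1 := aux_log (1 - c) c K₁ (P₁ x) (P₂ x) hc1' hc0 (by ring)
      (hP₁_pos x) (hP₂_pos x)
    have h2 := aux_log c (1 - c) K₂ (P₂ x) (P₁ x) hc0 hc1' (by ring)
      (hP₂_pos x) (hP₁_pos x)
    have h1' := mul_le_mul_of_nonneg_left
      (mul_le_mul_of_nonneg_right h1 (hP₁_pos x).le) hc1'
    have h2' := mul_le_mul_of_nonneg_left
      (mul_le_mul_of_nonneg_right h2 (hP₂_pos x).le) hc0
    have hmix : c * P₂ x + (1 - c) * P₁ x = (1 - c) * P₁ x + c * P₂ x := by ring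
    rw [hmix] at h2'
    simp only [hF, hG, ha₁, hb₁, ha₂, hb₂]
    nlinarith [h1', h2']
  have hmono : ∫ x, F x ≤ ∫ x, G x := integral_mono hFint hGint hFG
  have int1 : Integrable (fun x => (1 - c) * (P₁ x * Real.log (P₁ x))
      + c * (P₂ x * Real.log (P₂ x))) := (hent₁.const_mul _).add (hent₂.const_mul _)
  have hIF : ∫ x, F x = (1 - c) * (∫ x, P₁ x * Real.log (P₁ x))
      + c * (∫ x, P₂ x * Real.log (P₂ x))
      - ∫ x, ((1 - c) * P₁ x + c * P₂ x) * Real.log ((1 - c) * P₁ x + c * P₂ x) := by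
    simp only [hF]
    rw [integral_sub int1 hentf,
      integral_add (hent₁.const_mul _) (hent₂.const_mul _),
      integral_const_mul, integral_const_mul]
  have int2 : Integrable (fun x => a₁ * P₁ x + b₁ * (P₁ x * Real.log (P₂ x / P₁ x))) :=
    (hP₁i.const_mul _).add (hkl₁₂'.const_mul _)
  have int3 : Integrable (fun x => a₁ * P₁ x + b₁ * (P₁ x * Real.log (P₂ x / P₁ x))
      + a₂ * P₂ x) := int2.add (hP₂i.const_mul _)
  have hIG : ∫ x, G x = -(1 - c) * Real.log D₁ - c * Real.log D₂ := by
    simp only [hG]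
    rw [integral_add int3 (hkl₂₁'.const_mul _),
      integral_add int2 (hP₂i.const_mul _),
      integral_add (hP₁i.const_mul _) (hkl₁₂'.const_mul _),
      integral_const_mul, integral_const_mul, integral_const_mul, integral_const_mul,
      hP₁_int, hP₂_int, hI₁, hI₂, ha₁, hb₁, ha₂, hb₂]
    ring
  rw [hIF, hIG] at hmono
  linarith
end
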